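/- Let f be a group strategy-proof local priority mechanism for a constraint C and let α be the pointwise union of all implementable local compromiser assignments that induce f. Then for every allocation y and every agent i with i ∉ α(y), there exists a profile ≻ ∈ P^y such that f_i(≻) = y_i. -/

import Mathlib

/- Common framework: constrained allocation, local priority mechanisms
   (Root & Ahn, "Local Priority Mechanisms"). Agents `N`, objects `O`.
   A strict preference is encoded as a `LinearOrder` on `O`, where
   `pi.lt b a` means `a` is strictly preferred to `b`. -/

open Classical

noncomputable section

variable {N O : Type}

/-- `a` is strictly preferred to `b` under `pi`. -/
def sPref (pi : LinearOrder O) (a b : O) : Prop := pi.lt b a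

/-- `a` is weakly preferred to `b` under `pi`. -/
def wPref (pi : LinearOrder O) (a b : O) : Prop := a = b ∨ pi.lt b a

/-- The favourite (top-ranked) object under `pi`. -/
def topObj [Fintype O] [Nonempty O] (pi : LinearOrder O) : O :=
  @Finset.max' O pi Finset.univ Finset.univ_nonempty

/-- `tau1 p` is the allocation assigning each agent her favourite object. -/
def tau1 [Fintype O] [Nonempty O] (p : N → LinearOrder O) : N → O :=
  fun i => topObj (p i)

/-- The strict lower contour set of `a` under `pi`, as a finset. -/
def LCfin [Fintype O] (pi : LinearOrder O) (a : O) : Finset O :=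
  Finset.univ.filter fun b => pi.lt b a

/-- The best element of the strict lower contour set of `a` (junk value `a` if empty). -/
def bestLC [Fintype O] (pi : LinearOrder O) (a : O) : O :=
  if h : (LCfin pi a).Nonempty then @Finset.max' O pi _ h else a

/-- At `x`, no local compromiser has an empty strict lower contour set. -/
def lpNoFail [Fintype O] (α : (N → O) → Set N) (p : N → LinearOrder O) (x : N → O) : Prop :=
  ∀ i ∈ α x, (LCfin (p i) (x i)).Nonempty

/-- One step of the local priority algorithm: all local compromisers move to their
next-favourite object, everyone else stays put. -/
def lpStep [Fintype O] (α : (N → O) → Set N) (p : N → LinearOrder O) (x : N → O) : N → O :=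
  fun k => if k ∈ α x then bestLC (p k) (x k) else x k

/-- The local priority algorithm for `α` at profile `p` terminates (without failure)
returning the feasible allocation `y`. -/
def lpRunsTo [Fintype O] [Nonempty O] (C : Set (N → O)) (α : (N → O) → Set N)
    (p : N → LinearOrder O) (y : N → O) : Prop :=
  ∃ (m : ℕ) (x : ℕ → N → O),
    x 0 = tau1 p ∧
    (∀ t < m, x t ∉ C ∧ lpNoFail α p (x t) ∧ x (t + 1) = lpStep α p (x t)) ∧
    x m = y ∧ y ∈ C

/-- `α` is a local compromiser assignment for the constraint `C`. -/
def IsLCA (C : Set (N → O)) (α : (N → O) → Set N) : Prop :=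
  ∀ x, (x ∉ C → (α x).Nonempty) ∧ (x ∈ C → α x = ∅)

/-- `α` is implementable: the local priority algorithm returns a feasible
allocation (never the failure symbol) on every profile. -/
def lpImplementable [Fintype O] [Nonempty O] (C : Set (N → O)) (α : (N → O) → Set N) : Prop :=
  ∀ p : N → LinearOrder O, ∃ y, lpRunsTo C α p y

/-- `α` is an implementable local compromiser assignment for `C` inducing the mechanism `f`,
i.e. `f = LP_α`. -/
def lpInduces [Fintype O] [Nonempty O] (C : Set (N → O)) (α : (N → O) → Set N)
    (f : (N → LinearOrder O) → N → O) : Prop :=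
  IsLCA C α ∧ ∀ p, lpRunsTo C α p (f p)

/-- The local priority mechanism `LP_α` (well defined whenever `α` is implementable,
since the algorithm is deterministic). -/
def LPmech [Fintype O] [Nonempty O] (C : Set (N → O)) (α : (N → O) → Set N)
    (p : N → LinearOrder O) : N → O :=
  if h : ∃ y, lpRunsTo C α p y then h.choose else fun _ => Classical.arbitrary O

/-- Group strategy-proofness. -/
def GSP (f : (N → LinearOrder O) → N → O) : Prop :=
  ∀ (p p' : N → LinearOrder O) (M : Set N), M.Nonempty → (∀ j ∉ M, p' j = p j) →
    ¬ ((∀ j ∈ M, wPref (p j) (f p' j) (f p j)) ∧ ∃ k ∈ M, sPref (p k) (f p' k) (f p k))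

/-- (Individual) strategy-proofness. -/
def StratProof (f : (N → LinearOrder O) → N → O) : Prop :=
  ∀ (p p' : N → LinearOrder O) (i : N), (∀ j, j ≠ i → p' j = p j) →
    ¬ sPref (p i) (f p' i) (f p i)

/-- Nonbossiness. -/
def Nonbossy (f : (N → LinearOrder O) → N → O) : Prop :=
  ∀ (p p' : N → LinearOrder O) (i : N), (∀ j, j ≠ i → p' j = p j) →
    f p' i = f p i → f p' = f p

/-- Maskin monotonicity. -/
def MaskinMono (f : (N → LinearOrder O) → N → O) : Prop :=
  ∀ p p' : N → LinearOrder O,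
    (∀ (i : N) (b : O), (p i).lt b (f p i) → (p' i).lt b (f p i)) → f p' = f p

/-- Unanimity. -/
def Unanimity [Fintype O] [Nonempty O] (C : Set (N → O))
    (f : (N → LinearOrder O) → N → O) : Prop :=
  ∀ p, tau1 p ∈ C → f p = tau1 p

/-- The Fixed compromiser condition. -/
def FixedComp [Fintype O] [Nonempty O] (C : Set (N → O))
    (f : (N → LinearOrder O) → N → O) : Prop :=
  ∀ μ, μ ∉ C → ∃ i : N, ∀ p, tau1 p = μ → f p i ≠ μ i

/-- `pi'` is obtained from `pi` by moving `c` to the bottom of the ranking. -/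
def MoveBottom (pi pi' : LinearOrder O) (c : O) : Prop :=
  (∀ b, b ≠ c → pi'.lt c b) ∧ (∀ a b, a ≠ c → b ≠ c → (pi'.lt a b ↔ pi.lt a b))

/-- Compromiser invariance. -/
def CompInv [Fintype O] [Nonempty O] (C : Set (N → O))
    (f : (N → LinearOrder O) → N → O) : Prop :=
  ∀ μ, μ ∉ C → ∀ p p' : N → LinearOrder O, tau1 p = μ →
    (∀ i, (∀ q, tau1 q = μ → f q i ≠ μ i) → MoveBottom (p i) (p' i) (μ i)) →
    (∀ i, ¬ (∀ q, tau1 q = μ → f q i ≠ μ i) → p' i = p i) →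
    f p' = f p

/-- Pareto efficiency relative to the constraint `C`. -/
def ParetoEff (C : Set (N → O)) (f : (N → LinearOrder O) → N → O) : Prop :=
  ∀ p, ¬ ∃ ν ∈ C, (∀ i, wPref (p i) (ν i) (f p i)) ∧ ∃ k, sPref (p k) (ν k) (f p k)

/-- `diffSet x y = d(x,y)`, the set of agents on which `x` and `y` differ. -/
def diffSet (x y : N → O) : Set N := {i | x i ≠ y i}

/-- Forward consistency. -/
def ForwardCons (α : (N → O) → Set N) : Prop :=
  ∀ x y : N → O, diffSet x y ⊆ α x → α x \ diffSet x y ⊆ α y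

/-- The sequence of allocations `z 0, …, z m` is acyclic. -/
def AcyclicSeq (z : ℕ → N → O) (m : ℕ) : Prop :=
  ∀ (i : N) (r s t : ℕ), r < s → s < t → t ≤ m → z r i = z t i → z s i = z r i

/-- `x` and `y` are `i`-connected under `α`. -/
def IConn (α : (N → O) → Set N) (i : N) (x y : N → O) : Prop :=
  ∃ m : ℕ, 1 ≤ m ∧ ∃ z : ℕ → N → O,
    z 0 = x ∧ z m = y ∧ AcyclicSeq z m ∧ diffSet (z 0) (z 1) = {i} ∧
    ∀ l < m, diffSet (z l) (z (l + 1)) ⊆ α (z l)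

/-- Backward consistency. -/
def BackCons (C : Set (N → O)) (α : (N → O) → Set N) : Prop :=
  ∀ (i : N) (x y : N → O), x ∉ C → y ∉ C → IConn α i x y →
    ∀ x' : N → O, diffSet x x' ⊆ α y → i ∉ diffSet x x' → i ∈ α x'

/-- The pointwise union of all implementable local compromiser assignments inducing `f`. -/
def alphaUnionAll [Fintype O] [Nonempty O] (C : Set (N → O))
    (f : (N → LinearOrder O) → N → O) : (N → O) → Set N :=
  fun x => {i | ∃ β, lpInduces C β f ∧ i ∈ β x}

end

/-! If `y` is feasible, every profile topped by `y` is mapped to `y`. Otherwise let `F` be the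
agents who receive their part of `y` at no profile topped by `y`; the compromisers at `y` of any
inducing assignment `α` lie in `F`. Redirecting `α` at `y` to `F` still induces `f`. Where the run
at `p` passes through `y`, all of `F` step down at once, landing on the top of the profile that, for
each agent `j`, ranks first `y j` (only if `j ∉ F`), then the objects below `y j`, then the rest,
each block ordered by `p j`. Group strategy-proofness gives Maskin monotonicity, so this profile has
the outcome of `p`; along its run every holding stays in the first two blocks, where it ranks like
`p`, so that run continues the redirected run at `p`. Hence `F ⊆ α*(y)`, and any `i ∉ α*(y)`
receives `y i` at some profile topped by `y`. -/

variable {N O : Type}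

section Orders

variable (pi : LinearOrder O)

lemma wPref_iff_le {a b : O} : wPref pi a b ↔ pi.le b a := by
  let _ := pi
  rw [wPref, le_iff_lt_or_eq, eq_comm, or_comm]

lemma topObj_eq_of_forall_wPref [Fintype O] [Nonempty O] {a : O} (h : ∀ b, wPref pi a b) :
    topObj pi = a :=
  let _ := pi
  le_antisymm (Finset.max'_le _ _ a fun b _ => (wPref_iff_le pi).1 (h b))
    (Finset.le_max' _ a (Finset.mem_univ a))

section BestLC

variable [Fintype O]

lemma mem_LCfin {a b : O} : b ∈ LCfin pi a ↔ pi.lt b a := by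
  simp [LCfin]

lemma bestLC_lt {a : O} (h : (LCfin pi a).Nonempty) : pi.lt (bestLC pi a) a := by
  rw [bestLC, dif_pos h]
  exact (mem_LCfin pi).1 (@Finset.max'_mem O pi _ h)

lemma le_bestLC {a b : O} (hb : pi.lt b a) : pi.le b (bestLC pi a) := by
  rw [bestLC, dif_pos ⟨b, (mem_LCfin pi).2 hb⟩]
  exact @Finset.le_max' O pi _ b ((mem_LCfin pi).2 hb)

lemma bestLC_eq_of_forall_le {a c : O} (hc : pi.lt c a) (h : ∀ b, pi.lt b a → pi.le b c) :
    bestLC pi a = c :=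
  let _ := pi
  le_antisymm (h _ (bestLC_lt pi ⟨c, (mem_LCfin pi).2 hc⟩)) (le_bestLC pi hc)

lemma bestLC_eq_of_lt_iff (σ : LinearOrder O) {G : Set O}
    (hG : ∀ c ∈ G, ∀ b, pi.lt b c ↔ σ.lt b c ∧ b ∈ G) {c : O} (hc : c ∈ G)
    (hne : (LCfin σ c).Nonempty) (hbest : bestLC σ c ∈ G) :
    (LCfin pi c).Nonempty ∧ bestLC pi c = bestLC σ c := by
  have hlt : pi.lt (bestLC σ c) c := (hG c hc _).2 ⟨bestLC_lt σ hne, hbest⟩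
  refine ⟨⟨_, (mem_LCfin pi).2 hlt⟩, bestLC_eq_of_forall_le pi hlt fun b hb => ?_⟩
  let _ := pi
  obtain ⟨hbσ, hbG⟩ := (hG c hc b).1 hb
  refine le_of_not_gt fun hbb => ?_
  exact @not_lt_of_ge O σ.toPreorder _ _ (le_bestLC σ hbσ) ((hG b hbG _).1 hbb).1

end BestLC

abbrev refineBy (cls : O → ℕ) : LinearOrder O :=
  let _ := pi
  LinearOrder.lift' (fun a => toLex (cls a, a)) fun _ _ h => congrArg (fun z => (ofLex z).2) h

lemma refineBy_lt_iff (cls : O → ℕ) {a b : O} :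
    (refineBy pi cls).lt a b ↔ cls a < cls b ∨ cls a = cls b ∧ pi.lt a b :=
  let _ := pi
  Prod.Lex.toLex_lt_toLex

end Orders

section LiftOrder

variable (pi : LinearOrder O) (a : O) (keep : Prop)

noncomputable def liftRank (b : O) : ℕ :=
  if b = a ∧ keep then 2 else if pi.lt b a then 1 else 0

noncomputable abbrev liftOrder : LinearOrder O :=
  refineBy pi (liftRank pi a keep)

def liftHead : Set O := {b | b = a ∧ keep ∨ pi.lt b a}

lemma liftRank_le_two (b : O) : liftRank pi a keep b ≤ 2 := by
  unfold liftRank; split_ifs <;> omega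

variable {pi a keep}

lemma liftRank_pos_iff {b : O} : 0 < liftRank pi a keep b ↔ b ∈ liftHead pi a keep := by
  unfold liftRank liftHead; split_ifs <;> simp_all

lemma liftRank_eq_two_iff {b : O} : liftRank pi a keep b = 2 ↔ b = a ∧ keep := by
  unfold liftRank; split_ifs <;> simp_all

lemma liftRank_eq_one_of_lt {b : O} (hb : pi.lt b a) : liftRank pi a keep b = 1 := by
  let _ := pi
  simp [liftRank, hb.ne, hb]

lemma lt_of_liftRank_eq_one {b : O} (hb : liftRank pi a keep b = 1) : pi.lt b a := by
  unfold liftRank at hb; split_ifs at hb <;> simp_all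

lemma mem_liftHead_of_le {c : O} (hc : pi.le c a) (hkeep : c = a → keep) :
    c ∈ liftHead pi a keep := by
  let _ := pi
  rcases hc.lt_or_eq with hlt | rfl
  · exact Or.inr hlt
  · exact Or.inl ⟨rfl, hkeep rfl⟩

lemma mem_liftHead_of_liftOrder_le {b c : O} (hc : c ∈ liftHead pi a keep)
    (hcb : (liftOrder pi a keep).le c b) : b ∈ liftHead pi a keep := by
  rcases (@le_iff_lt_or_eq O (liftOrder pi a keep).toPartialOrder _ _).1 hcb with hcb | rfl
  · rw [← liftRank_pos_iff] at hc ⊢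
    rcases (refineBy_lt_iff pi _).1 hcb with h | ⟨h, _⟩ <;> omega
  · exact hc

lemma lt_iff_liftOrder_lt {b c : O} (hc : c ∈ liftHead pi a keep) :
    pi.lt b c ↔ (liftOrder pi a keep).lt b c ∧ b ∈ liftHead pi a keep := by
  rw [refineBy_lt_iff, ← liftRank_pos_iff]
  have hc₁ := liftRank_pos_iff.2 hc
  have hc₂ := liftRank_le_two pi a keep c
  have hb₂ := liftRank_le_two pi a keep b
  constructor
  · intro hbc
    have hba : pi.lt b a := by
      rcases hc with ⟨rfl, -⟩ | hca
      · exact hbc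
      · exact @lt_trans O _ _ _ _ hbc hca
    have hb₁ := liftRank_eq_one_of_lt (keep := keep) hba
    refine ⟨?_, by omega⟩
    rcases Nat.lt_or_ge 1 (liftRank pi a keep c) with h | h
    · exact Or.inl (by omega)
    · exact Or.inr ⟨by omega, hbc⟩
  · rintro ⟨h | ⟨-, h⟩, hb⟩
    · obtain ⟨rfl, -⟩ := liftRank_eq_two_iff.1 (show liftRank pi a keep c = 2 by omega)
      exact lt_of_liftRank_eq_one (keep := keep) (by omega)
    · exact h

end LiftOrder

section LiftOrderTop

variable [Fintype O] [Nonempty O] {pi : LinearOrder O} {a : O} {keep : Prop}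

lemma topObj_liftOrder_of_keep (hk : keep) : topObj (liftOrder pi a keep) = a := by
  refine topObj_eq_of_forall_wPref _ fun b => ?_
  by_cases hb : a = b
  · exact Or.inl hb
  refine Or.inr ((refineBy_lt_iff pi _).2 (Or.inl ?_))
  have hb₂ : liftRank pi a keep b ≠ 2 := fun h => hb (liftRank_eq_two_iff.1 h).1.symm
  have ha₂ : liftRank pi a keep a = 2 := liftRank_eq_two_iff.2 ⟨rfl, hk⟩
  have := liftRank_le_two pi a keep b
  omega

lemma topObj_liftOrder_of_not_keep (hk : ¬keep) (hne : (LCfin pi a).Nonempty) :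
    topObj (liftOrder pi a keep) = bestLC pi a := by
  have hc := bestLC_lt pi hne
  refine topObj_eq_of_forall_wPref _ fun b => ?_
  rw [wPref, refineBy_lt_iff, liftRank_eq_one_of_lt hc]
  by_cases hb : pi.lt b a
  · rw [liftRank_eq_one_of_lt hb]
    rcases (le_iff_lt_or_eq).1 (le_bestLC pi hb) with h | h
    · exact Or.inr (Or.inr ⟨rfl, h⟩)
    · exact Or.inl h.symm
  · have : liftRank pi a keep b = 0 := by simp [liftRank, hk, hb]
    omega

end LiftOrderTop

namespace GSP

variable {f : (N → LinearOrder O) → N → O}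

lemma stratProof (hgsp : GSP f) : StratProof f := fun p p' i hoff hi =>
  hgsp p p' {i} ⟨i, rfl⟩ hoff
    ⟨fun _ hj => hj ▸ Or.inr hi, i, rfl, hi⟩

lemma not_sPref_of_apply_eq (hgsp : GSP f) {p p' : N → LinearOrder O} {i : N}
    (hoff : ∀ j, j ≠ i → p' j = p j) (hi : f p' i = f p i) (j : N) :
    ¬ sPref (p j) (f p' j) (f p j) := fun hj =>
  hgsp p p' ({k | sPref (p k) (f p' k) (f p k)} ∪ {i}) ⟨i, Or.inr rfl⟩
    (fun k hk => hoff k fun h => hk (Or.inr h))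
    ⟨fun _ hk => hk.elim Or.inr fun h => Or.inl (h ▸ hi), j, Or.inl hj, hj⟩

lemma nonbossy (hgsp : GSP f) : Nonbossy f := by
  intro p p' i hoff hi
  funext j
  by_cases hji : j = i
  · exact hji ▸ hi
  have h₁ := hgsp.not_sPref_of_apply_eq hoff hi j
  have h₂ := hgsp.not_sPref_of_apply_eq (fun k hk => (hoff k hk).symm) hi.symm j
  rw [hoff j hji] at h₂
  rcases @lt_trichotomy O (p j) (f p' j) (f p j) with h | h | h
  exacts [absurd h h₂, h, absurd h h₁]

lemma apply_update_eq_of_lowerContour_subset (hgsp : GSP f) (p : N → LinearOrder O) (i : N)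
    (σ : LinearOrder O) (hmono : ∀ b, (p i).lt b (f p i) → σ.lt b (f p i)) :
    f (Function.update p i σ) = f p := by
  have hoff : ∀ j, j ≠ i → Function.update p i σ j = p j := fun j hj =>
    Function.update_of_ne hj σ p
  refine hgsp.nonbossy p _ i hoff ?_
  have h₁ := hgsp.stratProof p _ i hoff
  have h₂ := hgsp.stratProof _ p i fun j hj => (hoff j hj).symm
  rw [sPref] at h₁ h₂
  rw [Function.update_self] at h₂
  rcases @lt_trichotomy O (p i) (f (Function.update p i σ) i) (f p i) with h | h | h
  exacts [absurd (hmono _ h) h₂, h, absurd h h₁]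

theorem maskinMono [Fintype N] (hgsp : GSP f) : MaskinMono f := by
  intro p p' hmono
  suffices ∀ S : Finset N, f (S.piecewise p' p) = f p by simpa using this Finset.univ
  intro S
  induction S using Finset.induction_on with
  | empty => simp
  | insert i S hiS ih =>
    rw [Finset.piecewise_insert, hgsp.apply_update_eq_of_lowerContour_subset, ih]
    rw [ih, Finset.piecewise_eq_of_notMem _ _ _ hiS]
    exact hmono i

end GSP

section Run

variable [Fintype O] (C : Set (N → O)) (α : (N → O) → Set N) (p : N → LinearOrder O)

inductive LPRunFrom : (N → O) → (N → O) → Prop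
  | feasible {x : N → O} : x ∈ C → LPRunFrom x x
  | step {x z : N → O} :
      x ∉ C → lpNoFail α p x → LPRunFrom (lpStep α p x) z → LPRunFrom x z

variable {C α p}

lemma lpRunFrom_of_seq (m : ℕ) (x : ℕ → N → O)
    (hx : ∀ t < m, x t ∉ C ∧ lpNoFail α p (x t) ∧ x (t + 1) = lpStep α p (x t))
    (hm : x m ∈ C) : LPRunFrom C α p (x 0) (x m) := by
  induction m generalizing x with
  | zero => exact .feasible hm
  | succ m ih =>
    obtain ⟨hC, hnf, hstep⟩ := hx 0 m.succ_pos
    exact .step hC hnf (hstep ▸ ih (fun t => x (t + 1)) (fun t ht => hx (t + 1) (by omega)) hm)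

lemma LPRunFrom.exists_seq {x z : N → O} (h : LPRunFrom C α p x z) :
    ∃ (m : ℕ) (s : ℕ → N → O), s 0 = x ∧
      (∀ t < m, s t ∉ C ∧ lpNoFail α p (s t) ∧ s (t + 1) = lpStep α p (s t)) ∧
      s m = z ∧ z ∈ C := by
  induction h with
  | feasible hC => exact ⟨0, fun _ => _, rfl, by simp, rfl, hC⟩
  | @step x z hC hnf _ ih =>
    obtain ⟨m, s, hs0, hs, hsm, hz⟩ := ih
    refine ⟨m + 1, fun t => if t = 0 then x else s (t - 1), rfl, fun t ht => ?_, hsm, hz⟩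
    rcases t with _ | t
    · simpa [hs0] using ⟨hC, hnf⟩
    · simpa using hs t (by omega)

lemma lpRunsTo_iff [Nonempty O] {z : N → O} : lpRunsTo C α p z ↔ LPRunFrom C α p (tau1 p) z :=
  ⟨fun ⟨m, x, h0, hx, hm, hz⟩ => h0 ▸ hm ▸ lpRunFrom_of_seq m x hx (hm ▸ hz),
    LPRunFrom.exists_seq⟩

lemma lpStep_le {x : N → O} (hnf : lpNoFail α p x) (j : N) :
    (p j).le (lpStep α p x j) (x j) := by
  let _ := p j
  unfold lpStep
  split_ifs with hj
  · exact le_of_lt (bestLC_lt _ (hnf j hj))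
  · exact le_rfl

namespace LPRunFrom

variable {x z : N → O}

lemma eq_of_mem (h : LPRunFrom C α p x z) (hx : x ∈ C) : z = x := by
  cases h with
  | feasible _ => rfl
  | step hC _ _ => exact absurd hx hC

lemma apply_le (h : LPRunFrom C α p x z) (j : N) : (p j).le (z j) (x j) := by
  let _ := p j
  induction h with
  | feasible _ => exact le_rfl
  | step _ hnf _ ih => exact le_trans ih (lpStep_le hnf j)

lemma apply_lt_of_mem (h : LPRunFrom C α p x z) (hx : x ∉ C) {j : N} (hj : j ∈ α x) :
    (p j).lt (z j) (x j) := by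
  let _ := p j
  cases h with
  | feasible hC => exact absurd hC hx
  | step _ hnf h =>
    have hstep : lpStep α p x j = bestLC (p j) (x j) := if_pos hj
    exact lt_of_le_of_lt (h.apply_le j) (hstep ▸ bestLC_lt _ (hnf j hj))

end LPRunFrom

end Run

section LiftedRun

variable [Fintype O] {C : Set (N → O)} {α β : (N → O) → Set N}

lemma lpNoFail_congr {p : N → LinearOrder O} {x : N → O} (h : β x = α x) :
    lpNoFail β p x ↔ lpNoFail α p x := by
  unfold lpNoFail
  rw [h]

lemma lpStep_congr {p : N → LinearOrder O} {x : N → O} (h : β x = α x) :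
    lpStep β p x = lpStep α p x := by
  unfold lpStep
  rw [h]

/-- On the heads the lifted orders and `p` take the same steps, and the run never meets `y`. -/
lemma LPRunFrom.of_liftOrder {p : N → LinearOrder O} {y z w : N → O} {keep : N → Prop}
    (hβ : ∀ x, x ≠ y → β x = α x) (hz : ∀ j, z j ∈ liftHead (p j) (y j) (keep j))
    (hkeep : ∃ j, ¬ keep j)
    (h : LPRunFrom C α (fun j => liftOrder (p j) (y j) (keep j)) w z) :
    LPRunFrom C β p w z := by
  have hhead : ∀ {x}, LPRunFrom C α (fun j => liftOrder (p j) (y j) (keep j)) x z →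
      ∀ j, x j ∈ liftHead (p j) (y j) (keep j) := fun hx j =>
    mem_liftHead_of_liftOrder_le (hz j) (hx.apply_le j)
  induction h with
  | feasible hC => exact .feasible hC
  | @step x _ hC hnf hrun ih =>
    have hx := hhead (.step hC hnf hrun)
    have hxy : x ≠ y := by
      rintro rfl
      obtain ⟨j, hj⟩ := hkeep
      rcases hx j with ⟨-, hk⟩ | hlt
      · exact hj hk
      · exact @lt_irrefl O (p j).toPartialOrder.toPreorder _ hlt
    have hsame : ∀ k ∈ α x, (LCfin (p k) (x k)).Nonempty ∧
        bestLC (p k) (x k) = bestLC (liftOrder (p k) (y k) (keep k)) (x k) := fun k hk =>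
      bestLC_eq_of_lt_iff (p k) _ (fun _ hc _ => lt_iff_liftOrder_lt hc) (hx k) (hnf k hk)
        (by simpa [lpStep, hk] using hhead hrun k)
    refine .step hC ((lpNoFail_congr (hβ x hxy)).2 fun k hk => (hsame k hk).1) ?_
    rw [lpStep_congr (hβ x hxy)]
    convert ih hz hhead using 1
    funext k
    by_cases hk : k ∈ α x
    · simp only [lpStep, if_pos hk, (hsame k hk).2]
    · simp only [lpStep, if_neg hk]

end LiftedRun

section FixedCompromisers

variable [Fintype O] [Nonempty O] {C : Set (N → O)} {α : (N → O) → Set N}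
  {f : (N → LinearOrder O) → N → O}

lemma exists_tau1_eq (y : N → O) : ∃ p : N → LinearOrder O, tau1 p = y :=
  let base : LinearOrder O :=
    LinearOrder.lift' (Fintype.equivFin O) (Fintype.equivFin O).injective
  ⟨fun j => liftOrder base (y j) True, funext fun _ => topObj_liftOrder_of_keep trivial⟩

lemma lpInduces.unanimity (hα : lpInduces C α f) : Unanimity C f := fun p hp =>
  (lpRunsTo_iff.1 (hα.2 p)).eq_of_mem hp

def fixedCompromisers (f : (N → LinearOrder O) → N → O) (y : N → O) : Set N :=
  {j | ∀ q, tau1 q = y → f q j ≠ y j}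

lemma compromisers_subset_fixedCompromisers (hα : lpInduces C α f) {y : N → O} (hy : y ∉ C) :
    α y ⊆ fixedCompromisers f y := by
  intro j hj q hq
  have hrun := lpRunsTo_iff.1 (hα.2 q)
  rw [hq] at hrun
  exact @ne_of_lt O (q j).toPartialOrder.toPreorder _ _ (hrun.apply_lt_of_mem hy hj)

variable [Fintype N]

-- Lifting every `y j` to the top leaves the outcome unchanged, so it avoids `y j` on `F`.
lemma apply_lt_of_mem_fixedCompromisers (hgsp : GSP f) {p : N → LinearOrder O} {y : N → O}
    (hle : ∀ j, (p j).le (f p j) (y j)) {j : N} (hj : j ∈ fixedCompromisers f y) :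
    (p j).lt (f p j) (y j) := by
  have htop : tau1 (fun k => liftOrder (p k) (y k) True) = y :=
    funext fun _ => topObj_liftOrder_of_keep trivial
  have hf : f (fun k => liftOrder (p k) (y k) True) = f p := hgsp.maskinMono _ _ fun k _ hb =>
    ((lt_iff_liftOrder_lt (mem_liftHead_of_le (hle k) fun _ => trivial)).1 hb).1
  exact @lt_of_le_of_ne O (p j).toPartialOrder _ _ (hle j) (hf ▸ hj _ htop)

lemma lpRunFrom_update_fixedCompromisers_self (hgsp : GSP f) (hα : lpInduces C α f)
    {y : N → O} (hy : y ∉ C) {p : N → LinearOrder O} (h : LPRunFrom C α p y (f p)) :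
    LPRunFrom C (Function.update α y (fixedCompromisers f y)) p y (f p) := by
  set F := fixedCompromisers f y
  have hF : ∀ j ∈ F, (p j).lt (f p j) (y j) := fun _ =>
    apply_lt_of_mem_fixedCompromisers hgsp h.apply_le
  have hhead : ∀ j, f p j ∈ liftHead (p j) (y j) (j ∉ F) := fun j =>
    mem_liftHead_of_le (h.apply_le j) fun he hj =>
      @ne_of_lt O (p j).toPartialOrder.toPreorder _ _ (hF j hj) he
  have hfσ : f (fun j => liftOrder (p j) (y j) (j ∉ F)) = f p :=
    hgsp.maskinMono _ _ fun j _ hb => ((lt_iff_liftOrder_lt (hhead j)).1 hb).1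
  have htop : tau1 (fun j => liftOrder (p j) (y j) (j ∉ F)) =
      lpStep (Function.update α y F) p y := by
    funext j
    simp only [tau1, lpStep, Function.update_self]
    split_ifs with hj
    · exact topObj_liftOrder_of_not_keep (not_not.2 hj) ⟨_, (mem_LCfin _).2 (hF j hj)⟩
    · exact topObj_liftOrder_of_keep hj
  obtain ⟨j₀, hj₀⟩ := (hα.1 y).1 hy
  have hrun := lpRunsTo_iff.1 (hα.2 (fun j => liftOrder (p j) (y j) (j ∉ F)))
  rw [hfσ, htop] at hrun
  refine .step hy (fun j hj => ⟨f p j, (mem_LCfin _).2 (hF j (by simpa using hj))⟩) ?_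
  exact hrun.of_liftOrder (fun x hx => Function.update_of_ne hx _ _) hhead
    ⟨j₀, not_not.2 (compromisers_subset_fixedCompromisers hα hy hj₀)⟩

lemma lpRunFrom_update_fixedCompromisers (hgsp : GSP f) (hα : lpInduces C α f)
    {y : N → O} (hy : y ∉ C) {p : N → LinearOrder O} {x : N → O}
    (h : LPRunFrom C α p x (f p)) :
    LPRunFrom C (Function.update α y (fixedCompromisers f y)) p x (f p) := by
  generalize hz : f p = z at h
  induction h with
  | feasible hC => exact .feasible hC
  | @step x z hC hnf hrun ih =>
    by_cases hxy : x = y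
    · subst hxy hz
      exact lpRunFrom_update_fixedCompromisers_self hgsp hα hy (.step hC hnf hrun)
    · have hα' : Function.update α y (fixedCompromisers f y) x = α x :=
        Function.update_of_ne hxy _ _
      exact .step hC ((lpNoFail_congr hα').2 hnf) (lpStep_congr hα' ▸ ih hz)

theorem lpInduces_update_fixedCompromisers (hgsp : GSP f) (hα : lpInduces C α f)
    {y : N → O} (hy : y ∉ C) :
    lpInduces C (Function.update α y (fixedCompromisers f y)) f := by
  refine ⟨fun x => ⟨fun hx => ?_, fun hx => ?_⟩, fun p =>
    lpRunsTo_iff.2 (lpRunFrom_update_fixedCompromisers hgsp hα hy (lpRunsTo_iff.1 (hα.2 p)))⟩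
  · by_cases hxy : x = y
    · subst hxy
      rw [Function.update_self]
      exact ((hα.1 x).1 hx).mono (compromisers_subset_fixedCompromisers hα hy)
    · rw [Function.update_of_ne hxy]
      exact (hα.1 x).1 hx
  · rw [Function.update_of_ne (ne_of_mem_of_not_mem hx hy : x ≠ y)]
    exact (hα.1 x).2 hx

lemma fixedCompromisers_subset_alphaUnionAll (hgsp : GSP f) (hα : lpInduces C α f)
    {y : N → O} (hy : y ∉ C) : fixedCompromisers f y ⊆ alphaUnionAll C f y := by
  intro i hi
  refine ⟨_, lpInduces_update_fixedCompromisers hgsp hα hy, ?_⟩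
  rwa [Function.update_self]

end FixedCompromisers

theorem nonCompromiser_sometimes_top_general
    {N O : Type} [Fintype N] [Fintype O] [Nonempty O]
    (C : Set (N → O))
    (f : (N → LinearOrder O) → N → O)
    (hgsp : GSP f) (hlpm : ∃ α, lpInduces C α f) :
    ∀ (y : N → O) (i : N), i ∉ alphaUnionAll C f y →
      ∃ p : N → LinearOrder O, tau1 p = y ∧ f p i = y i := by
  intro y i hi
  obtain ⟨α, hα⟩ := hlpm
  by_cases hy : y ∈ C
  · obtain ⟨p, hp⟩ := exists_tau1_eq y
    exact ⟨p, hp, by rw [hα.unanimity p (hp ▸ hy), hp]⟩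
  · have hiF : i ∉ fixedCompromisers f y := fun hiF =>
      hi (fixedCompromisers_subset_alphaUnionAll hgsp hα hy hiF)
    simpa [fixedCompromisers] using hiF

/-- Lemma A.1: let `f` be a group strategy-proof local priority
mechanism and `α` the pointwise union of all implementable local compromiser
assignments inducing `f`.  Then for every allocation `y` and agent `i ∉ α(y)` there is
a profile in `P^y` at which `i` receives `y i`. -/
theorem nonCompromiser_sometimes_top
    {N O : Type} [Fintype N] [Fintype O] [Nonempty O]
    (C : Set (N → O)) (hC : C.Nonempty)
    (f : (N → LinearOrder O) → N → O) (hf : ∀ p, f p ∈ C)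
    (hgsp : GSP f) (hlpm : ∃ α, lpInduces C α f) :
    ∀ (y : N → O) (i : N), i ∉ alphaUnionAll C f y →
      ∃ p : N → LinearOrder O, tau1 p = y ∧ f p i = y i :=
  nonCompromiser_sometimes_top_general C f hgsp hlpm
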